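/- arXiv:2605.03120 — 5 statements merged into one kernel-verified Lean document; each statement's English description precedes it below -/
import Mathlib

section
/- Let H be a complex Hilbert space, let P_A, P_B, P_C, P_D be orthogonal projections on H, and let φ ∈ H be a unit vector. Suppose ⟨φ, P_X φ⟩ = 1/2 for each X ∈ {A, B, C, D}, and that ⟨φ, P_A P_B φ⟩ = 1/2, ⟨φ, P_B P_C φ⟩ = 1/2, and ⟨φ, P_C P_D φ⟩ = 1/2. Then ⟨φ, P_A P_D φ⟩ = 1/2. -/
open scoped InnerProductSpace
open ContinuousLinearMap

private lemma proj_inner_self {H : Type*} [NormedAddCommGroup H]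
    [InnerProductSpace ℂ H] [CompleteSpace H] (P : H →L[ℂ] H)
    (hsa : IsSelfAdjoint P) (hidem : P * P = P) (φ : H) :
    ⟪P φ, P φ⟫_ℂ = ⟪φ, P φ⟫_ℂ := by
  have h := hsa.adjoint_eq
  calc ⟪P φ, P φ⟫_ℂ = ⟪adjoint P φ, P φ⟫_ℂ := by rw [h]
    _ = ⟪φ, P (P φ)⟫_ℂ := adjoint_inner_left P _ _
    _ = ⟪φ, (P * P) φ⟫_ℂ := rfl
    _ = ⟪φ, P φ⟫_ℂ := by rw [hidem]

private lemma proj_vec_eq {H : Type*} [NormedAddCommGroup H]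
    [InnerProductSpace ℂ H] [CompleteSpace H] (P Q : H →L[ℂ] H)
    (hPsa : IsSelfAdjoint P) (hPidem : P * P = P)
    (hQsa : IsSelfAdjoint Q) (hQidem : Q * Q = Q) (φ : H)
    (hP : ⟪φ, P φ⟫_ℂ = 1 / 2) (hQ : ⟪φ, Q φ⟫_ℂ = 1 / 2)
    (hPQ : ⟪φ, P (Q φ)⟫_ℂ = 1 / 2) : P φ = Q φ := by
  have hcross : ⟪P φ, Q φ⟫_ℂ = 1 / 2 := by
    rw [← hPsa.adjoint_eq, adjoint_inner_left]; exact hPQ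
  have hcross' : ⟪Q φ, P φ⟫_ℂ = 1 / 2 := by
    rw [← inner_conj_symm, hcross]; simp [Complex.ext_iff]
  have hnorm : ⟪P φ - Q φ, P φ - Q φ⟫_ℂ = 0 := by
    rw [inner_sub_sub_self, proj_inner_self P hPsa hPidem,
      proj_inner_self Q hQsa hQidem, hP, hQ, hcross, hcross']
    ring
  have := inner_self_eq_zero.mp hnorm
  exact sub_eq_zero.mp this

/-- If each adjacent pair `(A,B)`, `(B,C)`, `(C,D)` of binary measurements, given by
orthogonal projections on a complex Hilbert space and performed on the unit vector `φ`,
yields a perfectly coordinated shared uniformly random bit, then the pair `(A,D)` is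
also perfectly correlated: `⟨φ, P_A P_D φ⟩ = 1/2`. -/
theorem chain_coordination_four {H : Type*} [NormedAddCommGroup H]
    [InnerProductSpace ℂ H] [CompleteSpace H] (PA PB PC PD : H →L[ℂ] H)
    (hAsa : IsSelfAdjoint PA) (hAidem : PA * PA = PA)
    (hBsa : IsSelfAdjoint PB) (hBidem : PB * PB = PB)
    (hCsa : IsSelfAdjoint PC) (hCidem : PC * PC = PC)
    (hDsa : IsSelfAdjoint PD) (hDidem : PD * PD = PD)
    (φ : H) (hφ : ‖φ‖ = 1)
    (hA : ⟪φ, PA φ⟫_ℂ = 1 / 2) (hB : ⟪φ, PB φ⟫_ℂ = 1 / 2)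
    (hC : ⟪φ, PC φ⟫_ℂ = 1 / 2) (hD : ⟪φ, PD φ⟫_ℂ = 1 / 2)
    (hAB : ⟪φ, PA (PB φ)⟫_ℂ = 1 / 2) (hBC : ⟪φ, PB (PC φ)⟫_ℂ = 1 / 2)
    (hCD : ⟪φ, PC (PD φ)⟫_ℂ = 1 / 2) :
    ⟪φ, PA (PD φ)⟫_ℂ = 1 / 2 := by
  have hAB' : PA φ = PB φ := proj_vec_eq PA PB hAsa hAidem hBsa hBidem φ hA hB hAB
  have hBC' : PB φ = PC φ := proj_vec_eq PB PC hBsa hBidem hCsa hCidem φ hB hC hBC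
  have hCD' : PC φ = PD φ := proj_vec_eq PC PD hCsa hCidem hDsa hDidem φ hC hD hCD
  calc ⟪φ, PA (PD φ)⟫_ℂ = ⟪ContinuousLinearMap.adjoint PA φ, PD φ⟫_ℂ :=
        (ContinuousLinearMap.adjoint_inner_left PA _ _).symm
    _ = ⟪PA φ, PD φ⟫_ℂ := by rw [hAsa.adjoint_eq]
    _ = ⟪PD φ, PD φ⟫_ℂ := by rw [hAB', hBC', hCD']
    _ = ⟪φ, PD φ⟫_ℂ := proj_inner_self PD hDsa hDidem φ
    _ = 1 / 2 := hD
end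

section
/- There do not exist a complex Hilbert space H, a unit vector φ ∈ H, and orthogonal projections P_A, P_B, P_C, P_D on H such that: (i) ⟨φ, P_X φ⟩ = 1/2 for each X ∈ {A, B, C, D}; (ii) ⟨φ, P_A P_B φ⟩ = 1/2, ⟨φ, P_B P_C φ⟩ = 1/2, and ⟨φ, P_C P_D φ⟩ = 1/2; and (iii) ⟨φ, P_A P_D φ⟩ = ⟨φ, P_A φ⟩ · ⟨φ, P_D φ⟩. -/
open scoped InnerProductSpace


lemma sa_inner {H : Type*} [NormedAddCommGroup H] [InnerProductSpace ℂ H] [CompleteSpace H]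
    (P : H →L[ℂ] H) (hP : IsSelfAdjoint P) (x y : H) : ⟪x, P y⟫_ℂ = ⟪P x, y⟫_ℂ := by
  nth_rewrite 1 [← ContinuousLinearMap.isSelfAdjoint_iff'.mp hP]
  exact ContinuousLinearMap.adjoint_inner_right P x y

lemma eq_vec {H : Type*} [NormedAddCommGroup H] [InnerProductSpace ℂ H] [CompleteSpace H]
    (P Q : H →L[ℂ] H) (hP : IsSelfAdjoint P) (hQ : IsSelfAdjoint Q)
    (hPi : P * P = P) (hQi : Q * Q = Q) (φ : H)
    (h1 : ⟪φ, P φ⟫_ℂ = 1/2) (h2 : ⟪φ, Q φ⟫_ℂ = 1/2) (h3 : ⟪φ, P (Q φ)⟫_ℂ = 1/2) :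
    P φ = Q φ := by
  have hPP : ⟪P φ, P φ⟫_ℂ = 1/2 := by
    rw [← sa_inner P hP]
    have := congrArg (fun T : H →L[ℂ] H => ⟪φ, T φ⟫_ℂ) hPi
    simpa using this.trans h1
  have hQQ : ⟪Q φ, Q φ⟫_ℂ = 1/2 := by
    rw [← sa_inner Q hQ]
    have := congrArg (fun T : H →L[ℂ] H => ⟪φ, T φ⟫_ℂ) hQi
    simpa using this.trans h2
  have hPQ : ⟪P φ, Q φ⟫_ℂ = 1/2 := by rw [← sa_inner P hP]; exact h3
  have hQP : ⟪Q φ, P φ⟫_ℂ = 1/2 := by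
    rw [← inner_conj_symm, hPQ]; simp [Complex.ext_iff]
  have : ⟪P φ - Q φ, P φ - Q φ⟫_ℂ = 0 := by
    rw [inner_sub_sub_self, hPP, hQQ, hPQ, hQP]; ring
  have := inner_self_eq_zero.mp this
  exact sub_eq_zero.mp this


/-- **Core contradiction of the Coordination Principle proof.** There is no complex Hilbert
space `H`, unit vector `φ` and orthogonal projections `P_A, P_B, P_C, P_D` on `H` such that
each adjacent pair `(A,B)`, `(B,C)`, `(C,D)` outputs a perfectly coordinated shared random
bit while `(A,D)` are statistically independent: the hypotheses below are contradictory. -/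
theorem no_coordination_with_independence {H : Type*} [NormedAddCommGroup H]
    [InnerProductSpace ℂ H] [CompleteSpace H] (PA PB PC PD : H →L[ℂ] H)
    (hAsa : IsSelfAdjoint PA) (hAidem : PA * PA = PA)
    (hBsa : IsSelfAdjoint PB) (hBidem : PB * PB = PB)
    (hCsa : IsSelfAdjoint PC) (hCidem : PC * PC = PC)
    (hDsa : IsSelfAdjoint PD) (hDidem : PD * PD = PD)
    (φ : H) (hφ : ‖φ‖ = 1)
    (hA : ⟪φ, PA φ⟫_ℂ = 1 / 2) (hB : ⟪φ, PB φ⟫_ℂ = 1 / 2)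
    (hC : ⟪φ, PC φ⟫_ℂ = 1 / 2) (hD : ⟪φ, PD φ⟫_ℂ = 1 / 2)
    (hAB : ⟪φ, PA (PB φ)⟫_ℂ = 1 / 2) (hBC : ⟪φ, PB (PC φ)⟫_ℂ = 1 / 2)
    (hCD : ⟪φ, PC (PD φ)⟫_ℂ = 1 / 2)
    (hInd : ⟪φ, PA (PD φ)⟫_ℂ = ⟪φ, PA φ⟫_ℂ * ⟪φ, PD φ⟫_ℂ) :
    False := by
  have hABv := eq_vec PA PB hAsa hBsa hAidem hBidem φ hA hB hAB
  have hBCv := eq_vec PB PC hBsa hCsa hBidem hCidem φ hB hC hBC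
  have hCDv := eq_vec PC PD hCsa hDsa hCidem hDidem φ hC hD hCD
  have hDD : ⟪PD φ, PD φ⟫_ℂ = 1/2 := by
    rw [← sa_inner PD hDsa]
    have := congrArg (fun T : H →L[ℂ] H => ⟪φ, T φ⟫_ℂ) hDidem
    simpa using this.trans hD
  have hAD : ⟪φ, PA (PD φ)⟫_ℂ = 1/2 := by
    rw [sa_inner PA hAsa, hABv, hBCv, hCDv]; exact hDD
  rw [hA, hD, hAD] at hInd
  norm_num at hInd
end

section
/- Let H be a complex Hilbert space, let n ≥ 2, let P_1, …, P_n be orthogonal projections on H, and let φ ∈ H be a unit vector. Suppose that for every i < n one has ⟨φ, P_i φ⟩ = 1/2, ⟨φ, P_{i+1} φ⟩ = 1/2, and ⟨φ, P_i P_{i+1} φ⟩ = 1/2. Then P_1 φ = P_n φ, and consequently ⟨φ, P_1 P_n φ⟩ = 1/2. -/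
open scoped InnerProductSpace

lemma two_step {H : Type*} [NormedAddCommGroup H]
    [InnerProductSpace ℂ H] [CompleteSpace H] (P Q : H →L[ℂ] H)
    (hP : IsSelfAdjoint P) (hP2 : P * P = P)
    (hQ : IsSelfAdjoint Q) (hQ2 : Q * Q = Q)
    (φ : H) (h1 : ⟪φ, P φ⟫_ℂ = 1 / 2) (h2 : ⟪φ, Q φ⟫_ℂ = 1 / 2)
    (h3 : ⟪φ, P (Q φ)⟫_ℂ = 1 / 2) : P φ = Q φ := by
  have hPadj : ∀ x y : H, ⟪P x, y⟫_ℂ = ⟪x, P y⟫_ℂ := fun x y => by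
    rw [← hP.adjoint_eq, ContinuousLinearMap.adjoint_inner_right, hP.adjoint_eq]
  have hQadj : ∀ x y : H, ⟪Q x, y⟫_ℂ = ⟪x, Q y⟫_ℂ := fun x y => by
    rw [← hQ.adjoint_eq, ContinuousLinearMap.adjoint_inner_right, hQ.adjoint_eq]
  have hPP : ⟪P φ, P φ⟫_ℂ = 1 / 2 := by
    rw [hPadj]
    have : P (P φ) = P φ := by
      conv_rhs => rw [← hP2]; rfl
      rfl
    rw [this, h1]
  have hQQ : ⟪Q φ, Q φ⟫_ℂ = 1 / 2 := by
    rw [hQadj]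
    have : Q (Q φ) = Q φ := by
      conv_rhs => rw [← hQ2]; rfl
      rfl
    rw [this, h2]
  have hPQ : ⟪P φ, Q φ⟫_ℂ = 1 / 2 := by rw [hPadj]; exact h3
  have hQP : ⟪Q φ, P φ⟫_ℂ = 1 / 2 := by
    have := congrArg (starRingEnd ℂ) hPQ
    rwa [inner_conj_symm, map_div₀, map_one, map_ofNat] at this
  have hz : ⟪P φ - Q φ, P φ - Q φ⟫_ℂ = 0 := by
    rw [inner_sub_left, inner_sub_right, inner_sub_right, hPP, hQQ, hPQ, hQP]
    ring
  have := inner_self_eq_zero.mp hz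
  exact sub_eq_zero.mp this

/-- **N-party chain lemma.** Let `P 1, …, P n` (`n ≥ 2`) be orthogonal projections on a
complex Hilbert space and `φ` a unit vector. If every adjacent pair `(P i, P (i+1))`,
`1 ≤ i < n`, yields a perfectly coordinated shared uniformly random bit on `φ`, then
`P 1 φ = P n φ`, and consequently `⟨φ, P 1 (P n) φ⟩ = 1/2`. -/
theorem chain_coordination_n {H : Type*} [NormedAddCommGroup H]
    [InnerProductSpace ℂ H] [CompleteSpace H] (n : ℕ) (hn : 2 ≤ n)
    (P : ℕ → H →L[ℂ] H)
    (hproj : ∀ i, 1 ≤ i → i ≤ n → IsSelfAdjoint (P i) ∧ P i * P i = P i)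
    (φ : H) (hφ : ‖φ‖ = 1)
    (hchain : ∀ i, 1 ≤ i → i < n →
      ⟪φ, P i φ⟫_ℂ = 1 / 2 ∧ ⟪φ, P (i + 1) φ⟫_ℂ = 1 / 2 ∧
        ⟪φ, P i (P (i + 1) φ)⟫_ℂ = 1 / 2) :
    P 1 φ = P n φ ∧ ⟪φ, P 1 (P n φ)⟫_ℂ = 1 / 2 := by
  have key : ∀ k, 1 ≤ k → k ≤ n → P 1 φ = P k φ := by
    intro k hk1 hkn
    induction k with
    | zero => omega
    | succ m ih =>
      rcases Nat.eq_or_lt_of_le hk1 with h | h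
      · rw [← h]
      · have hm1 : 1 ≤ m := by omega
        have hmn : m < n := by omega
        obtain ⟨h1, h2, h3⟩ := hchain m hm1 hmn
        obtain ⟨hPa, hPi⟩ := hproj m hm1 hmn.le
        obtain ⟨hQa, hQi⟩ := hproj (m + 1) (by omega) hkn
        have := two_step (P m) (P (m + 1)) hPa hPi hQa hQi φ h1 h2 h3
        rw [ih hm1 hmn.le, this]
  have h1n : P 1 φ = P n φ := key n (by omega) le_rfl
  refine ⟨h1n, ?_⟩
  obtain ⟨h1, _, _⟩ := hchain 1 le_rfl (by omega)
  obtain ⟨hPa, hPi⟩ := hproj 1 le_rfl (by omega)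
  rw [← h1n]
  have : P 1 (P 1 φ) = P 1 φ := by
    conv_rhs => rw [← hPi]; rfl
    rfl
  rw [this, h1]
end

section
/- Consider four parties A, B, C, D and the following quantum circuit. For each 3-element subset S of {A,B,C,D} (a source) and each 2-element subset T ⊂ S, fix a finite-dimensional complex Hilbert space H_{S,T}, and for each 2-element subset T of {A,B,C,D} (a transformation) and each party X ∈ T, fix a finite-dimensional complex Hilbert space K_{T,X}. For each source S, let ψ_S be a unit vector in ⊗_{T ⊂ S, |T|=2} H_{S,T}. For each transformation T, let U_T be a unitary (linear isometric equivalence) from ⊗_{S ⊃ T, |S|=3} H_{S,T} onto ⊗_{X ∈ T} K_{T,X}. For each party X and each bit x ∈ {0,1}, let Π_X^x be orthogonal projections on ⊗_{T ∋ X, |T|=2} K_{T,X} with Π_X^0 + Π_X^1 = 1. Define, for bits a,b,c,d, the probability P(a,b,c,d) = ⟨ψ| U† (Π_A^a ⊗ Π_B^b ⊗ Π_C^c ⊗ Π_D^d) U |ψ⟩, where |ψ⟩ is the tensor product of the four source states ψ_S and U is the tensor product of the six unitaries U_T (with the implicit reordering of tensor factors). Then it is impossible that P(a,b,c,d) = 1/2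 whenever a=b=c=d and P(a,b,c,d) = 0 otherwise. -/
open scoped Matrix

/-!
**Theorem 1 (quantum theory satisfies the Coordination Principle), canonical four-party
circuit of Fig. 1.**

Parties: `A, B, C, D`.  Sources are the 3-element subsets `ABC, ABD, ACD, BCD` of the
parties; transformations are the 2-element subsets `AB, AC, AD, BC, BD, CD`.  For each
source `S` and each 2-element subset `T ⊂ S` there is a finite-dimensional complex Hilbert
space `H_{S,T}` (modelled concretely as `ℂ^{iS_T}` for a finite index type `iS_T`), and for
each transformation `T` and party `X ∈ T` a space `K_{T,X}` (modelled as `ℂ^{kT_X}`).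
Tensor products of these spaces are modelled as spaces of `ℂ`-valued functions on the
product of the index types, with the standard inner product; tensor products of vectors,
unitaries and projectors are given entrywise by products of the entries of the factors,
which also realizes the canonical reordering of tensor factors.
-/

section

variable {iABC_AB iABC_AC iABC_BC iABD_AB iABD_AD iABD_BD
    iACD_AC iACD_AD iACD_CD iBCD_BC iBCD_BD iBCD_CD : Type}
variable [Fintype iABC_AB] [Fintype iABC_AC] [Fintype iABC_BC]
  [Fintype iABD_AB] [Fintype iABD_AD] [Fintype iABD_BD]
  [Fintype iACD_AC] [Fintype iACD_AD] [Fintype iACD_CD]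
  [Fintype iBCD_BC] [Fintype iBCD_BD] [Fintype iBCD_CD]
variable [DecidableEq iABC_AB] [DecidableEq iABC_AC] [DecidableEq iABC_BC]
  [DecidableEq iABD_AB] [DecidableEq iABD_AD] [DecidableEq iABD_BD]
  [DecidableEq iACD_AC] [DecidableEq iACD_AD] [DecidableEq iACD_CD]
  [DecidableEq iBCD_BC] [DecidableEq iBCD_BD] [DecidableEq iBCD_CD]
variable {kAB_A kAB_B kAC_A kAC_C kAD_A kAD_D kBC_B kBC_C kBD_B kBD_D kCD_C kCD_D : Type}
variable [Fintype kAB_A] [Fintype kAB_B] [Fintype kAC_A] [Fintype kAC_C]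
  [Fintype kAD_A] [Fintype kAD_D] [Fintype kBC_B] [Fintype kBC_C]
  [Fintype kBD_B] [Fintype kBD_D] [Fintype kCD_C] [Fintype kCD_D]
variable [DecidableEq kAB_A] [DecidableEq kAB_B] [DecidableEq kAC_A] [DecidableEq kAC_C]
  [DecidableEq kAD_A] [DecidableEq kAD_D] [DecidableEq kBC_B] [DecidableEq kBC_C]
  [DecidableEq kBD_B] [DecidableEq kBD_D] [DecidableEq kCD_C] [DecidableEq kCD_D]

/-- The probability `P(a,b,c,d) = ⟨ψ| U† (Π_A^a ⊗ Π_B^b ⊗ Π_C^c ⊗ Π_D^d) U |ψ⟩` of the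
canonical circuit, where `|ψ⟩` is the tensor product of the four source states and `U` the
tensor product of the six transformation unitaries. -/
noncomputable def circuitProb
    (ψABC : iABC_AB × iABC_AC × iABC_BC → ℂ)
    (ψABD : iABD_AB × iABD_AD × iABD_BD → ℂ)
    (ψACD : iACD_AC × iACD_AD × iACD_CD → ℂ)
    (ψBCD : iBCD_BC × iBCD_BD × iBCD_CD → ℂ)
    (UAB : Matrix (kAB_A × kAB_B) (iABC_AB × iABD_AB) ℂ)
    (UAC : Matrix (kAC_A × kAC_C) (iABC_AC × iACD_AC) ℂ)
    (UAD : Matrix (kAD_A × kAD_D) (iABD_AD × iACD_AD) ℂ)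
    (UBC : Matrix (kBC_B × kBC_C) (iABC_BC × iBCD_BC) ℂ)
    (UBD : Matrix (kBD_B × kBD_D) (iABD_BD × iBCD_BD) ℂ)
    (UCD : Matrix (kCD_C × kCD_D) (iACD_CD × iBCD_CD) ℂ)
    (PiA : Bool → Matrix (kAB_A × kAC_A × kAD_A) (kAB_A × kAC_A × kAD_A) ℂ)
    (PiB : Bool → Matrix (kAB_B × kBC_B × kBD_B) (kAB_B × kBC_B × kBD_B) ℂ)
    (PiC : Bool → Matrix (kAC_C × kBC_C × kCD_C) (kAC_C × kBC_C × kCD_C) ℂ)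
    (PiD : Bool → Matrix (kAD_D × kBD_D × kCD_D) (kAD_D × kBD_D × kCD_D) ℂ)
    (a b c d : Bool) : ℂ :=
  -- the global source state |ψ⟩ = ψ_ABC ⊗ ψ_ABD ⊗ ψ_ACD ⊗ ψ_BCD
  let Ψ : (iABC_AB × iABC_AC × iABC_BC) × (iABD_AB × iABD_AD × iABD_BD) ×
      (iACD_AC × iACD_AD × iACD_CD) × (iBCD_BC × iBCD_BD × iBCD_CD) → ℂ :=
    fun x => ψABC x.1 * ψABD x.2.1 * ψACD x.2.2.1 * ψBCD x.2.2.2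
  -- the global unitary U = U_AB ⊗ U_AC ⊗ U_AD ⊗ U_BC ⊗ U_BD ⊗ U_CD (with reordering)
  let U : Matrix
      ((kAB_A × kAB_B) × (kAC_A × kAC_C) × (kAD_A × kAD_D) ×
        (kBC_B × kBC_C) × (kBD_B × kBD_D) × (kCD_C × kCD_D))
      ((iABC_AB × iABC_AC × iABC_BC) × (iABD_AB × iABD_AD × iABD_BD) ×
        (iACD_AC × iACD_AD × iACD_CD) × (iBCD_BC × iBCD_BD × iBCD_CD)) ℂ :=
    fun k x =>
      UAB k.1 (x.1.1, x.2.1.1) *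
      UAC k.2.1 (x.1.2.1, x.2.2.1.1) *
      UAD k.2.2.1 (x.2.1.2.1, x.2.2.1.2.1) *
      UBC k.2.2.2.1 (x.1.2.2, x.2.2.2.1) *
      UBD k.2.2.2.2.1 (x.2.1.2.2, x.2.2.2.2.1) *
      UCD k.2.2.2.2.2 (x.2.2.1.2.2, x.2.2.2.2.2)
  -- the global projector Π_A^a ⊗ Π_B^b ⊗ Π_C^c ⊗ Π_D^d (with reordering)
  let Pr : Matrix
      ((kAB_A × kAB_B) × (kAC_A × kAC_C) × (kAD_A × kAD_D) ×
        (kBC_B × kBC_C) × (kBD_B × kBD_D) × (kCD_C × kCD_D))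
      ((kAB_A × kAB_B) × (kAC_A × kAC_C) × (kAD_A × kAD_D) ×
        (kBC_B × kBC_C) × (kBD_B × kBD_D) × (kCD_C × kCD_D)) ℂ :=
    fun k k' =>
      PiA a (k.1.1, k.2.1.1, k.2.2.1.1) (k'.1.1, k'.2.1.1, k'.2.2.1.1) *
      PiB b (k.1.2, k.2.2.2.1.1, k.2.2.2.2.1.1) (k'.1.2, k'.2.2.2.1.1, k'.2.2.2.2.1.1) *
      PiC c (k.2.1.2, k.2.2.2.1.2, k.2.2.2.2.2.1) (k'.2.1.2, k'.2.2.2.1.2, k'.2.2.2.2.2.1) *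
      PiD d (k.2.2.1.2, k.2.2.2.2.1.2, k.2.2.2.2.2.2) (k'.2.2.1.2, k'.2.2.2.2.1.2, k'.2.2.2.2.2.2)
  star Ψ ⬝ᵥ (Uᴴ * Pr * U) *ᵥ Ψ

/-!
Write `O_X = Π_X^0 - Π_X^1` for the `±1` observable of party `X` and `Φ = U ψ` for the output
state. Perfect coordination gives `⟨Φ, O_X O_Y Φ⟩ = 1` for all pairs of parties, so the unit
vectors `O_A Φ, …, O_D Φ` all coincide; pulling this common vector back through `U` gives a
vector `χ = U† (O_X ⊗ 1) U ψ` that does not depend on `X`. The transformations not touching `X`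
cancel in `U† (O_X ⊗ 1) U`, so this operator acts trivially on the source opposite to `X`: `χ`
is a multiple of that source state in its slot. Being so for all four sources, `χ` is a multiple
of `ψ`, namely `⟨ψ, χ⟩ ψ = ⟨Φ, O_A Φ⟩ ψ = 0`, whereas `χ` is a unit vector since `U U† = 1`.
-/

-- `DecidableEq` on products of twelve index types exceeds the default instance size.
set_option synthInstance.maxSize 512

open Matrix
open scoped Kronecker ComplexOrder

section Kronecker

variable {l m n p : Type*}

theorem conjTranspose_kronecker_mul_kronecker [Fintype l] [Fintype n] [DecidableEq m]
    [DecidableEq p] {A : Matrix l m ℂ} {B : Matrix n p ℂ} (hA : Aᴴ * A = 1) (hB : Bᴴ * B = 1) :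
    (A ⊗ₖ B)ᴴ * (A ⊗ₖ B) = 1 := by
  rw [conjTranspose_kronecker, ← mul_kronecker_mul, hA, hB, one_kronecker_one]

theorem kronecker_mul_conjTranspose_kronecker [Fintype m] [Fintype p] [DecidableEq l]
    [DecidableEq n] {A : Matrix l m ℂ} {B : Matrix n p ℂ} (hA : A * Aᴴ = 1) (hB : B * Bᴴ = 1) :
    (A ⊗ₖ B) * (A ⊗ₖ B)ᴴ = 1 := by
  rw [conjTranspose_kronecker, ← mul_kronecker_mul, hA, hB, one_kronecker_one]

theorem submatrix_mul_conjTranspose_submatrix {l' n' : Type*} [Fintype n] [Fintype n']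
    [DecidableEq l'] [DecidableEq m] {A : Matrix m n ℂ} (hA : A * Aᴴ = 1) (e₁ : l' ≃ m)
    (e₂ : n' ≃ n) : A.submatrix e₁ e₂ * (A.submatrix e₁ e₂)ᴴ = 1 := by
  rw [conjTranspose_submatrix, submatrix_mul_equiv, hA, submatrix_one_equiv]

theorem kronecker_one_mulVec_apply [Fintype m] [Fintype n] [DecidableEq n] (N : Matrix m m ℂ)
    (f : m × n → ℂ) (i : m) (j : n) :
    ((N ⊗ₖ (1 : Matrix n n ℂ)) *ᵥ f) (i, j) = ∑ i', N i i' * f (i', j) := by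
  simp [mulVec, dotProduct, Fintype.sum_prod_type, one_apply]

theorem conjTranspose_kronecker_mul_kronecker_one_mul [Fintype l] [Fintype n] [DecidableEq n]
    [DecidableEq p] (X : Matrix l m ℂ) {Y : Matrix n p ℂ} (hY : Yᴴ * Y = 1) (M : Matrix l l ℂ) :
    (X ⊗ₖ Y)ᴴ * (M ⊗ₖ (1 : Matrix n n ℂ)) * (X ⊗ₖ Y) = (Xᴴ * M * X) ⊗ₖ (1 : Matrix p p ℂ) := by
  rw [conjTranspose_kronecker, ← mul_kronecker_mul, ← mul_kronecker_mul, Matrix.mul_one, hY]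

/-- Once `W` and `O` are split as `X ⊗ Y` and `M ⊗ 1`, the isometry `Y` cancels, so `W† O W`
only acts on the first input factor. -/
theorem conjTranspose_mulVec_mulVec_mulVec_apply {K I G F IX R : Type*} [Fintype K] [Fintype I]
    [Fintype G] [Fintype F] [Fintype IX] [Fintype R] [DecidableEq F] [DecidableEq R]
    (eK : K ≃ G × F) (eI : I ≃ IX × R) (X : Matrix G IX ℂ) {Y : Matrix F R ℂ} (hY : Yᴴ * Y = 1)
    (M : Matrix G G ℂ) {W : Matrix K I ℂ} (hW : W = (X ⊗ₖ Y).submatrix eK eI)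
    {O : Matrix K K ℂ} (hO : O = (M ⊗ₖ (1 : Matrix F F ℂ)).submatrix eK eK) (f : I → ℂ) (x : I) :
    (Wᴴ *ᵥ (O *ᵥ (W *ᵥ f))) x = ∑ i, (Xᴴ * M * X) (eI x).1 i * f (eI.symm (i, (eI x).2)) := by
  rw [hW, hO, mulVec_mulVec, mulVec_mulVec, conjTranspose_submatrix, submatrix_mul_equiv,
    submatrix_mul_equiv, conjTranspose_kronecker_mul_kronecker_one_mul X hY,
    submatrix_mulVec_equiv, Function.comp_apply]
  exact kronecker_one_mulVec_apply _ _ _ _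

end Kronecker

section Vectors

variable {ι κ : Type*} [Fintype ι]

theorem dotProduct_star_self_eq_one {ψ : ι → ℂ} (h : ∑ x, ‖ψ x‖ ^ 2 = 1) :
    star ψ ⬝ᵥ ψ = 1 := by
  simp only [dotProduct, Pi.star_apply, RCLike.star_def, Complex.conj_mul']
  exact_mod_cast h

theorem star_mulVec_dotProduct_mulVec [Fintype κ] (A B : Matrix κ ι ℂ) (v : ι → ℂ) :
    star (A *ᵥ v) ⬝ᵥ B *ᵥ v = star v ⬝ᵥ (Aᴴ * B) *ᵥ v := by
  rw [star_mulVec, ← dotProduct_mulVec, mulVec_mulVec]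

theorem dotProduct_mulVec_conj_submatrix [Fintype κ] {κ' : Type*} [Fintype κ']
    (W : Matrix κ ι ℂ) (e : κ' ≃ κ) (Q : Matrix κ κ ℂ) (v : ι → ℂ) :
    star v ⬝ᵥ ((W.submatrix e id)ᴴ * Q.submatrix e e * W.submatrix e id) *ᵥ v =
      star (W *ᵥ v) ⬝ᵥ Q *ᵥ (W *ᵥ v) := by
  rw [conjTranspose_submatrix, submatrix_mul_equiv, submatrix_mul_equiv, submatrix_id_id,
    ← mulVec_mulVec, ← mulVec_mulVec, dotProduct_mulVec, ← star_mulVec]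

theorem eq_of_dotProduct_star_eq_one {v w : ι → ℂ} (hv : star v ⬝ᵥ v = 1)
    (hw : star w ⬝ᵥ w = 1) (hvw : star v ⬝ᵥ w = 1) : v = w := by
  have hwv : star w ⬝ᵥ v = 1 := by rw [star_dotProduct, hvw, star_one]
  rw [← sub_eq_zero, ← dotProduct_star_self_eq_zero, star_sub, sub_dotProduct, dotProduct_sub,
    dotProduct_sub, hv, hw, hvw, hwv]
  norm_num

theorem mulVec_eq_mulVec_of_dotProduct_eq_one [DecidableEq ι] {v : ι → ℂ} {A B : Matrix ι ι ℂ}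
    (hA : Aᴴ * A = 1) (hB : Bᴴ * B = 1) (hv : star v ⬝ᵥ v = 1)
    (hAB : star v ⬝ᵥ (Aᴴ * B) *ᵥ v = 1) : A *ᵥ v = B *ᵥ v := by
  refine eq_of_dotProduct_star_eq_one ?_ ?_ ?_ <;>
    simpa only [star_mulVec_dotProduct_mulVec, hA, hB, one_mulVec]

end Vectors

theorem IsIdempotentElem.sub_mul_self_eq_one {R : Type*} [Ring R] {p q : R}
    (hp : IsIdempotentElem p) (hpq : p + q = 1) : (p - q) * (p - q) = 1 := by
  obtain rfl : q = 1 - p := eq_sub_of_add_eq' hpq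
  simp only [sub_mul, mul_sub, one_mul, mul_one, hp.eq]
  abel

section Measurement

variable {n : Type*}

def IsBinaryMeasurement [Fintype n] [DecidableEq n] (P : Bool → Matrix n n ℂ) : Prop :=
  (∀ t, (P t).IsHermitian ∧ P t * P t = P t) ∧ P false + P true = 1

def binaryObservable (P : Bool → Matrix n n ℂ) : Matrix n n ℂ :=
  P false - P true

theorem binaryObservable_eq_sum (P : Bool → Matrix n n ℂ) :
    binaryObservable P = ∑ t, (if t then -1 else 1 : ℂ) • P t := by
  simp [binaryObservable, sub_eq_add_neg, add_comm]

namespace IsBinaryMeasurement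

variable [Fintype n] [DecidableEq n] {P : Bool → Matrix n n ℂ}

theorem one_eq_sum (hP : IsBinaryMeasurement P) : (1 : Matrix n n ℂ) = ∑ t, (1 : ℂ) • P t := by
  simp [← hP.2, add_comm]

theorem isHermitian_binaryObservable (hP : IsBinaryMeasurement P) :
    (binaryObservable P).IsHermitian :=
  (hP.1 false).1.sub (hP.1 true).1

theorem binaryObservable_mul_self (hP : IsBinaryMeasurement P) :
    binaryObservable P * binaryObservable P = 1 :=
  IsIdempotentElem.sub_mul_self_eq_one (hP.1 false).2 hP.2

end IsBinaryMeasurement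

end Measurement

section Coordination

variable {KA KB KC KD : Type*}

def tensor4 (A : Matrix KA KA ℂ) (B : Matrix KB KB ℂ) (C : Matrix KC KC ℂ) (D : Matrix KD KD ℂ) :
    Matrix (((KA × KB) × KC) × KD) (((KA × KB) × KC) × KD) ℂ :=
  A ⊗ₖ B ⊗ₖ C ⊗ₖ D

theorem tensor4_one [DecidableEq KA] [DecidableEq KB] [DecidableEq KC] [DecidableEq KD] :
    tensor4 (1 : Matrix KA KA ℂ) (1 : Matrix KB KB ℂ) (1 : Matrix KC KC ℂ) (1 : Matrix KD KD ℂ) =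
      1 := by
  simp only [tensor4, one_kronecker_one]

def IsPerfectlyCoordinated (P : Bool → Bool → Bool → Bool → ℂ) : Prop :=
  ∀ a b c d, P a b c d = if a = b ∧ b = c ∧ c = d then 1 / 2 else 0

variable [Fintype KA] [Fintype KB] [Fintype KC] [Fintype KD]

theorem tensor4_conjTranspose_mul (A A' : Matrix KA KA ℂ) (B B' : Matrix KB KB ℂ)
    (C C' : Matrix KC KC ℂ) (D D' : Matrix KD KD ℂ) :
    (tensor4 A B C D)ᴴ * tensor4 A' B' C' D' =
      tensor4 (Aᴴ * A') (Bᴴ * B') (Cᴴ * C') (Dᴴ * D') := by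
  simp only [tensor4, conjTranspose_kronecker, mul_kronecker_mul]

variable {Φ : ((KA × KB) × KC) × KD → ℂ} {PA : Bool → Matrix KA KA ℂ}
  {PB : Bool → Matrix KB KB ℂ} {PC : Bool → Matrix KC KC ℂ} {PD : Bool → Matrix KD KD ℂ}

namespace IsPerfectlyCoordinated

theorem expectation_tensor4
    (h : IsPerfectlyCoordinated fun a b c d => star Φ ⬝ᵥ tensor4 (PA a) (PB b) (PC c) (PD d) *ᵥ Φ)
    {MA : Matrix KA KA ℂ} {MB : Matrix KB KB ℂ} {MC : Matrix KC KC ℂ} {MD : Matrix KD KD ℂ}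
    {fA fB fC fD : Bool → ℂ} (hA : MA = ∑ t, fA t • PA t) (hB : MB = ∑ t, fB t • PB t)
    (hC : MC = ∑ t, fC t • PC t) (hD : MD = ∑ t, fD t • PD t) :
    star Φ ⬝ᵥ tensor4 MA MB MC MD *ᵥ Φ =
      (fA false * fB false * fC false * fD false + fA true * fB true * fC true * fD true) / 2 := by
  have h' : ∀ a b c d, star Φ ⬝ᵥ tensor4 (PA a) (PB b) (PC c) (PD d) *ᵥ Φ = _ := h
  simp only [tensor4] at h'
  simp only [tensor4, hA, hB, hC, hD, Fintype.sum_bool, add_kronecker, kronecker_add,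
    smul_kronecker, kronecker_smul, add_mulVec, smul_mulVec, dotProduct_add, dotProduct_smul, h']
  simp only [Bool.false_eq_true, Bool.true_eq_false, and_self, and_true, and_false, ↓reduceIte,
    smul_eq_mul, mul_zero, add_zero, zero_add]
  ring

theorem expectation_binaryObservable_eq_zero [DecidableEq KB] [DecidableEq KC] [DecidableEq KD]
    (h : IsPerfectlyCoordinated fun a b c d => star Φ ⬝ᵥ tensor4 (PA a) (PB b) (PC c) (PD d) *ᵥ Φ)
    (hB : IsBinaryMeasurement PB) (hC : IsBinaryMeasurement PC) (hD : IsBinaryMeasurement PD) :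
    star Φ ⬝ᵥ tensor4 (binaryObservable PA) 1 1 1 *ᵥ Φ = 0 := by
  rw [h.expectation_tensor4 (binaryObservable_eq_sum PA) hB.one_eq_sum hC.one_eq_sum
    hD.one_eq_sum]
  norm_num

variable [DecidableEq KA] [DecidableEq KB] [DecidableEq KC] [DecidableEq KD]

theorem dotProduct_star_self
    (h : IsPerfectlyCoordinated fun a b c d => star Φ ⬝ᵥ tensor4 (PA a) (PB b) (PC c) (PD d) *ᵥ Φ)
    (hA : IsBinaryMeasurement PA) (hB : IsBinaryMeasurement PB)
    (hC : IsBinaryMeasurement PC) (hD : IsBinaryMeasurement PD) : star Φ ⬝ᵥ Φ = 1 := by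
  calc star Φ ⬝ᵥ Φ = star Φ ⬝ᵥ tensor4 1 1 1 1 *ᵥ Φ := by rw [tensor4_one, one_mulVec]
    _ = 1 := by
      rw [h.expectation_tensor4 hA.one_eq_sum hB.one_eq_sum hC.one_eq_sum hD.one_eq_sum]
      norm_num

theorem binaryObservable_mulVec_eq
    (h : IsPerfectlyCoordinated fun a b c d => star Φ ⬝ᵥ tensor4 (PA a) (PB b) (PC c) (PD d) *ᵥ Φ)
    (hA : IsBinaryMeasurement PA) (hB : IsBinaryMeasurement PB)
    (hC : IsBinaryMeasurement PC) (hD : IsBinaryMeasurement PD) :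
    tensor4 (binaryObservable PA) 1 1 1 *ᵥ Φ = tensor4 1 (binaryObservable PB) 1 1 *ᵥ Φ ∧
      tensor4 (binaryObservable PA) 1 1 1 *ᵥ Φ = tensor4 1 1 (binaryObservable PC) 1 *ᵥ Φ ∧
      tensor4 (binaryObservable PA) 1 1 1 *ᵥ Φ = tensor4 1 1 1 (binaryObservable PD) *ᵥ Φ := by
  have hΦ := h.dotProduct_star_self hA hB hC hD
  refine ⟨?_, ?_, ?_⟩ <;>
    refine mulVec_eq_mulVec_of_dotProduct_eq_one ?_ ?_ hΦ ?_ <;>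
    simp only [tensor4_conjTranspose_mul, hA.isHermitian_binaryObservable.eq,
      hB.isHermitian_binaryObservable.eq, hC.isHermitian_binaryObservable.eq,
      hD.isHermitian_binaryObservable.eq, hA.binaryObservable_mul_self,
      hB.binaryObservable_mul_self, hC.binaryObservable_mul_self, hD.binaryObservable_mul_self,
      conjTranspose_one, Matrix.one_mul, Matrix.mul_one, tensor4_one]
  · rw [h.expectation_tensor4 (binaryObservable_eq_sum PA) (binaryObservable_eq_sum PB)
      hC.one_eq_sum hD.one_eq_sum]
    norm_num
  · rw [h.expectation_tensor4 (binaryObservable_eq_sum PA) hB.one_eq_sum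
      (binaryObservable_eq_sum PC) hD.one_eq_sum]
    norm_num
  · rw [h.expectation_tensor4 (binaryObservable_eq_sum PA) hB.one_eq_sum hC.one_eq_sum
      (binaryObservable_eq_sum PD)]
    norm_num

end IsPerfectlyCoordinated

end Coordination

section ProductState

variable {S₁ S₂ S₃ S₄ : Type*} [Fintype S₁] [Fintype S₂] [Fintype S₃] [Fintype S₄]

def productState (ψ₁ : S₁ → ℂ) (ψ₂ : S₂ → ℂ) (ψ₃ : S₃ → ℂ) (ψ₄ : S₄ → ℂ) :
    S₁ × S₂ × S₃ × S₄ → ℂ :=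
  fun x => ψ₁ x.1 * ψ₂ x.2.1 * ψ₃ x.2.2.1 * ψ₄ x.2.2.2

theorem dotProduct_star_productState (ψ₁ : S₁ → ℂ) (ψ₂ : S₂ → ℂ) (ψ₃ : S₃ → ℂ) (ψ₄ : S₄ → ℂ) :
    star (productState ψ₁ ψ₂ ψ₃ ψ₄) ⬝ᵥ productState ψ₁ ψ₂ ψ₃ ψ₄ =
      (star ψ₁ ⬝ᵥ ψ₁) * ((star ψ₂ ⬝ᵥ ψ₂) * ((star ψ₃ ⬝ᵥ ψ₃) * (star ψ₄ ⬝ᵥ ψ₄))) := by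
  have regroup : ∀ a b c d a' b' c' d' : ℂ,
      a * b * c * d * (a' * b' * c' * d') = a * a' * (b * b' * (c * c' * (d * d'))) :=
    fun _ _ _ _ _ _ _ _ => by ring
  simp only [dotProduct, productState, Pi.star_apply, star_mul', Fintype.sum_prod_type, regroup,
    ← Finset.mul_sum, ← Finset.sum_mul]

/-- `hᵢ` says that `χ` factors as `ψᵢ` in slot `i` times a vector on the other three slots. -/
theorem eq_smul_productState {ψ₁ : S₁ → ℂ} {ψ₂ : S₂ → ℂ} {ψ₃ : S₃ → ℂ} {ψ₄ : S₄ → ℂ}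
    (hψ : star (productState ψ₁ ψ₂ ψ₃ ψ₄) ⬝ᵥ productState ψ₁ ψ₂ ψ₃ ψ₄ = 1)
    {χ : S₁ × S₂ × S₃ × S₄ → ℂ}
    (h₁ : ∀ p p' q r s, χ (p, q, r, s) * ψ₁ p' = χ (p', q, r, s) * ψ₁ p)
    (h₂ : ∀ p q q' r s, χ (p, q, r, s) * ψ₂ q' = χ (p, q', r, s) * ψ₂ q)
    (h₃ : ∀ p q r r' s, χ (p, q, r, s) * ψ₃ r' = χ (p, q, r', s) * ψ₃ r)
    (h₄ : ∀ p q r s s', χ (p, q, r, s) * ψ₄ s' = χ (p, q, r, s') * ψ₄ s) :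
    χ = (star (productState ψ₁ ψ₂ ψ₃ ψ₄) ⬝ᵥ χ) • productState ψ₁ ψ₂ ψ₃ ψ₄ := by
  set Ψ := productState ψ₁ ψ₂ ψ₃ ψ₄
  have hsymm : ∀ x y, χ x * Ψ y = χ y * Ψ x := by
    rintro ⟨p, q, r, s⟩ ⟨p', q', r', s'⟩
    simp only [Ψ, productState]
    -- move from `(p, q, r, s)` to `(p', q', r', s')` one slot at a time, starting with the last
    linear_combination ψ₁ p' * ψ₂ q' * ψ₃ r' * h₄ p q r s s' + ψ₁ p' * ψ₂ q' * ψ₄ s * h₃ p q r r' s'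
      + ψ₁ p' * ψ₃ r * ψ₄ s * h₂ p q q' r' s' + ψ₂ q * ψ₃ r * ψ₄ s * h₁ p p' q' r' s'
  funext x
  calc χ x = χ x * (star Ψ ⬝ᵥ Ψ) := by rw [hψ, mul_one]
    _ = ∑ y, star (Ψ y) * (χ x * Ψ y) := by
      simp only [dotProduct, Pi.star_apply, Finset.mul_sum]
      congr! 1
      ring
    _ = ∑ y, star (Ψ y) * (χ y * Ψ x) := by simp only [hsymm]
    _ = ((star Ψ ⬝ᵥ χ) • Ψ) x := by
      simp only [Pi.smul_apply, smul_eq_mul, dotProduct, Pi.star_apply, Finset.sum_mul, mul_assoc]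

end ProductState

section Circuit

def outputsByParty :
    (kAB_A × kAB_B) × (kAC_A × kAC_C) × (kAD_A × kAD_D) × (kBC_B × kBC_C) × (kBD_B × kBD_D) ×
      (kCD_C × kCD_D) ≃
    (((kAB_A × kAC_A × kAD_A) × (kAB_B × kBC_B × kBD_B)) × (kAC_C × kBC_C × kCD_C)) ×
      (kAD_D × kBD_D × kCD_D) where
  toFun := fun ⟨(ab_a, ab_b), (ac_a, ac_c), (ad_a, ad_d), (bc_b, bc_c), (bd_b, bd_d),
      (cd_c, cd_d)⟩ =>
    ((((ab_a, ac_a, ad_a), (ab_b, bc_b, bd_b)), (ac_c, bc_c, cd_c)), (ad_d, bd_d, cd_d))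
  invFun := fun ⟨⟨⟨(ab_a, ac_a, ad_a), (ab_b, bc_b, bd_b)⟩, (ac_c, bc_c, cd_c)⟩,
      (ad_d, bd_d, cd_d)⟩ =>
    ((ab_a, ab_b), (ac_a, ac_c), (ad_a, ad_d), (bc_b, bc_c), (bd_b, bd_d), (cd_c, cd_d))
  left_inv _ := rfl
  right_inv _ := rfl

def outputsByTransformation :
    (((kAB_A × kAC_A × kAD_A) × (kAB_B × kBC_B × kBD_B)) × (kAC_C × kBC_C × kCD_C)) ×
      (kAD_D × kBD_D × kCD_D) ≃
    (((((kAB_A × kAB_B) × (kAC_A × kAC_C)) × (kAD_A × kAD_D)) × (kBC_B × kBC_C)) ×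
      (kBD_B × kBD_D)) × (kCD_C × kCD_D) where
  toFun := fun ⟨⟨⟨(ab_a, ac_a, ad_a), (ab_b, bc_b, bd_b)⟩, (ac_c, bc_c, cd_c)⟩,
      (ad_d, bd_d, cd_d)⟩ =>
    ((((((ab_a, ab_b), (ac_a, ac_c)), (ad_a, ad_d)), (bc_b, bc_c)), (bd_b, bd_d)), (cd_c, cd_d))
  invFun := fun ⟨⟨⟨⟨⟨(ab_a, ab_b), (ac_a, ac_c)⟩, (ad_a, ad_d)⟩, (bc_b, bc_c)⟩, (bd_b, bd_d)⟩,
      (cd_c, cd_d)⟩ =>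
    ((((ab_a, ac_a, ad_a), (ab_b, bc_b, bd_b)), (ac_c, bc_c, cd_c)), (ad_d, bd_d, cd_d))
  left_inv _ := rfl
  right_inv _ := rfl

def inputsByTransformation :
    (iABC_AB × iABC_AC × iABC_BC) × (iABD_AB × iABD_AD × iABD_BD) ×
      (iACD_AC × iACD_AD × iACD_CD) × (iBCD_BC × iBCD_BD × iBCD_CD) ≃
    (((((iABC_AB × iABD_AB) × (iABC_AC × iACD_AC)) × (iABD_AD × iACD_AD)) ×
      (iABC_BC × iBCD_BC)) × (iABD_BD × iBCD_BD)) × (iACD_CD × iBCD_CD) where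
  toFun := fun ⟨(abc_ab, abc_ac, abc_bc), (abd_ab, abd_ad, abd_bd), (acd_ac, acd_ad, acd_cd),
      (bcd_bc, bcd_bd, bcd_cd)⟩ =>
    ((((((abc_ab, abd_ab), (abc_ac, acd_ac)), (abd_ad, acd_ad)), (abc_bc, bcd_bc)),
      (abd_bd, bcd_bd)), (acd_cd, bcd_cd))
  invFun := fun ⟨⟨⟨⟨⟨(abc_ab, abd_ab), (abc_ac, acd_ac)⟩, (abd_ad, acd_ad)⟩, (abc_bc, bcd_bc)⟩,
      (abd_bd, bcd_bd)⟩, (acd_cd, bcd_cd)⟩ =>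
    ((abc_ab, abc_ac, abc_bc), (abd_ab, abd_ad, abd_bd), (acd_ac, acd_ad, acd_cd),
      (bcd_bc, bcd_bd, bcd_cd))
  left_inv _ := rfl
  right_inv _ := rfl

/- The six transformation slots, in the order `AB, AC, AD, BC, BD, CD`, regrouped into the three
transformations acting on one party and the three others. -/

def splitA {α₁ α₂ α₃ α₄ α₅ α₆ : Type*} :
    ((((α₁ × α₂) × α₃) × α₄) × α₅) × α₆ ≃ ((α₁ × α₂) × α₃) × ((α₄ × α₅) × α₆) where
  toFun := fun ⟨⟨⟨⟨⟨x₁, x₂⟩, x₃⟩, x₄⟩, x₅⟩, x₆⟩ => (((x₁, x₂), x₃), ((x₄, x₅), x₆))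
  invFun := fun ⟨⟨⟨x₁, x₂⟩, x₃⟩, ⟨⟨x₄, x₅⟩, x₆⟩⟩ => (((((x₁, x₂), x₃), x₄), x₅), x₆)
  left_inv _ := rfl
  right_inv _ := rfl

def splitB {α₁ α₂ α₃ α₄ α₅ α₆ : Type*} :
    ((((α₁ × α₂) × α₃) × α₄) × α₅) × α₆ ≃ ((α₁ × α₄) × α₅) × ((α₂ × α₃) × α₆) where
  toFun := fun ⟨⟨⟨⟨⟨x₁, x₂⟩, x₃⟩, x₄⟩, x₅⟩, x₆⟩ => (((x₁, x₄), x₅), ((x₂, x₃), x₆))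
  invFun := fun ⟨⟨⟨x₁, x₄⟩, x₅⟩, ⟨⟨x₂, x₃⟩, x₆⟩⟩ => (((((x₁, x₂), x₃), x₄), x₅), x₆)
  left_inv _ := rfl
  right_inv _ := rfl

def splitC {α₁ α₂ α₃ α₄ α₅ α₆ : Type*} :
    ((((α₁ × α₂) × α₃) × α₄) × α₅) × α₆ ≃ ((α₂ × α₄) × α₆) × ((α₁ × α₃) × α₅) where
  toFun := fun ⟨⟨⟨⟨⟨x₁, x₂⟩, x₃⟩, x₄⟩, x₅⟩, x₆⟩ => (((x₂, x₄), x₆), ((x₁, x₃), x₅))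
  invFun := fun ⟨⟨⟨x₂, x₄⟩, x₆⟩, ⟨⟨x₁, x₃⟩, x₅⟩⟩ => (((((x₁, x₂), x₃), x₄), x₅), x₆)
  left_inv _ := rfl
  right_inv _ := rfl

def splitD {α₁ α₂ α₃ α₄ α₅ α₆ : Type*} :
    ((((α₁ × α₂) × α₃) × α₄) × α₅) × α₆ ≃ ((α₃ × α₅) × α₆) × ((α₁ × α₂) × α₄) where
  toFun := fun ⟨⟨⟨⟨⟨x₁, x₂⟩, x₃⟩, x₄⟩, x₅⟩, x₆⟩ => (((x₃, x₅), x₆), ((x₁, x₂), x₄))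
  invFun := fun ⟨⟨⟨x₃, x₅⟩, x₆⟩, ⟨⟨x₁, x₂⟩, x₄⟩⟩ => (((((x₁, x₂), x₃), x₄), x₅), x₆)
  left_inv _ := rfl
  right_inv _ := rfl

variable (UAB : Matrix (kAB_A × kAB_B) (iABC_AB × iABD_AB) ℂ)
  (UAC : Matrix (kAC_A × kAC_C) (iABC_AC × iACD_AC) ℂ)
  (UAD : Matrix (kAD_A × kAD_D) (iABD_AD × iACD_AD) ℂ)
  (UBC : Matrix (kBC_B × kBC_C) (iABC_BC × iBCD_BC) ℂ)
  (UBD : Matrix (kBD_B × kBD_D) (iABD_BD × iBCD_BD) ℂ)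
  (UCD : Matrix (kCD_C × kCD_D) (iACD_CD × iBCD_CD) ℂ)

def circuitUnitary :
    Matrix ((((kAB_A × kAC_A × kAD_A) × (kAB_B × kBC_B × kBD_B)) × (kAC_C × kBC_C × kCD_C)) ×
      (kAD_D × kBD_D × kCD_D))
      ((iABC_AB × iABC_AC × iABC_BC) × (iABD_AB × iABD_AD × iABD_BD) ×
        (iACD_AC × iACD_AD × iACD_CD) × (iBCD_BC × iBCD_BD × iBCD_CD)) ℂ :=
  (UAB ⊗ₖ UAC ⊗ₖ UAD ⊗ₖ UBC ⊗ₖ UBD ⊗ₖ UCD).submatrix outputsByTransformation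
    inputsByTransformation

structure IsUnitaryCircuit : Prop where
  ab : UABᴴ * UAB = 1 ∧ UAB * UABᴴ = 1
  ac : UACᴴ * UAC = 1 ∧ UAC * UACᴴ = 1
  ad : UADᴴ * UAD = 1 ∧ UAD * UADᴴ = 1
  bc : UBCᴴ * UBC = 1 ∧ UBC * UBCᴴ = 1
  bd : UBDᴴ * UBD = 1 ∧ UBD * UBDᴴ = 1
  cd : UCDᴴ * UCD = 1 ∧ UCD * UCDᴴ = 1

variable {UAB UAC UAD UBC UBD UCD}
  {ψABC : iABC_AB × iABC_AC × iABC_BC → ℂ} {ψABD : iABD_AB × iABD_AD × iABD_BD → ℂ}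
  {ψACD : iACD_AC × iACD_AD × iACD_CD → ℂ} {ψBCD : iBCD_BC × iBCD_BD × iBCD_CD → ℂ}

namespace IsUnitaryCircuit

theorem circuitUnitary_mul_conjTranspose (hU : IsUnitaryCircuit UAB UAC UAD UBC UBD UCD) :
    circuitUnitary UAB UAC UAD UBC UBD UCD * (circuitUnitary UAB UAC UAD UBC UBD UCD)ᴴ = 1 :=
  submatrix_mul_conjTranspose_submatrix (kronecker_mul_conjTranspose_kronecker
    (kronecker_mul_conjTranspose_kronecker (kronecker_mul_conjTranspose_kronecker
      (kronecker_mul_conjTranspose_kronecker (kronecker_mul_conjTranspose_kronecker hU.ab.2 hU.ac.2)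
        hU.ad.2) hU.bc.2) hU.bd.2) hU.cd.2) _ _

theorem pullback_partyA_mul_eq (hU : IsUnitaryCircuit UAB UAC UAD UBC UBD UCD)
    (M : Matrix (kAB_A × kAC_A × kAD_A) (kAB_A × kAC_A × kAD_A) ℂ)
    {χ : _ → ℂ} (hχ : χ = (circuitUnitary UAB UAC UAD UBC UBD UCD)ᴴ *ᵥ (tensor4 M 1 1 1 *ᵥ
      (circuitUnitary UAB UAC UAD UBC UBD UCD *ᵥ productState ψABC ψABD ψACD ψBCD)))
    (p q r s s') : χ (p, q, r, s) * ψBCD s' = χ (p, q, r, s') * ψBCD s := by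
  have hloc := conjTranspose_mulVec_mulVec_mulVec_apply (outputsByTransformation.trans splitA)
    (inputsByTransformation.trans splitA) (UAB ⊗ₖ UAC ⊗ₖ UAD)
    (conjTranspose_kronecker_mul_kronecker (conjTranspose_kronecker_mul_kronecker hU.bc.1 hU.bd.1)
      hU.cd.1)
    ((M ⊗ₖ 1).submatrix (fun ⟨⟨(a₁, b), (a₂, c)⟩, (a₃, d)⟩ => ((a₁, a₂, a₃), (b, c, d)))
      (fun ⟨⟨(a₁, b), (a₂, c)⟩, (a₃, d)⟩ => ((a₁, a₂, a₃), (b, c, d))))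
    (W := circuitUnitary UAB UAC UAD UBC UBD UCD) (O := tensor4 M 1 1 1)
    (by
      ext
      simp only [circuitUnitary, outputsByTransformation, inputsByTransformation, splitA,
        submatrix_apply, kroneckerMap_apply, Equiv.coe_trans, Equiv.coe_fn_mk, Function.comp_apply,
        Prod.mk.eta]
      ring)
    (by
      ext ⟨⟨⟨a, b₁, b₂, b₃⟩, c₁, c₂, c₃⟩, d₁, d₂, d₃⟩
        ⟨⟨⟨a', b₁', b₂', b₃'⟩, c₁', c₂', c₃'⟩, d₁', d₂', d₃'⟩
      simp only [tensor4, submatrix_apply, kronecker_apply, one_apply, Equiv.trans_apply,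
        outputsByTransformation, splitA, Equiv.coe_fn_mk, Prod.mk.injEq]
      split_ifs <;> simp_all)
    (productState ψABC ψABD ψACD ψBCD)
  obtain ⟨p₁, p₂, p₃⟩ := p
  obtain ⟨q₁, q₂, q₃⟩ := q
  obtain ⟨r₁, r₂, r₃⟩ := r
  rw [hχ, hloc, hloc, Finset.sum_mul, Finset.sum_mul]
  refine Finset.sum_congr rfl fun i _ => ?_
  simp only [productState, inputsByTransformation, splitA, Equiv.trans_apply, Equiv.symm_trans,
    Equiv.symm_mk, Equiv.coe_fn_mk, Prod.mk.eta]
  ring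

theorem pullback_partyB_mul_eq (hU : IsUnitaryCircuit UAB UAC UAD UBC UBD UCD)
    (M : Matrix (kAB_B × kBC_B × kBD_B) (kAB_B × kBC_B × kBD_B) ℂ)
    {χ : _ → ℂ} (hχ : χ = (circuitUnitary UAB UAC UAD UBC UBD UCD)ᴴ *ᵥ (tensor4 1 M 1 1 *ᵥ
      (circuitUnitary UAB UAC UAD UBC UBD UCD *ᵥ productState ψABC ψABD ψACD ψBCD)))
    (p q r r' s) : χ (p, q, r, s) * ψACD r' = χ (p, q, r', s) * ψACD r := by
  have hloc := conjTranspose_mulVec_mulVec_mulVec_apply (outputsByTransformation.trans splitB)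
    (inputsByTransformation.trans splitB) (UAB ⊗ₖ UBC ⊗ₖ UBD)
    (conjTranspose_kronecker_mul_kronecker (conjTranspose_kronecker_mul_kronecker hU.ac.1 hU.ad.1)
      hU.cd.1)
    ((M ⊗ₖ 1).submatrix (fun ⟨⟨(a, b₁), (b₂, c)⟩, (b₃, d)⟩ => ((b₁, b₂, b₃), (a, c, d)))
      (fun ⟨⟨(a, b₁), (b₂, c)⟩, (b₃, d)⟩ => ((b₁, b₂, b₃), (a, c, d))))
    (W := circuitUnitary UAB UAC UAD UBC UBD UCD) (O := tensor4 1 M 1 1)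
    (by
      ext
      simp only [circuitUnitary, outputsByTransformation, inputsByTransformation, splitB,
        submatrix_apply, kroneckerMap_apply, Equiv.coe_trans, Equiv.coe_fn_mk, Function.comp_apply]
      ring)
    (by
      ext ⟨⟨⟨⟨a₁, a₂, a₃⟩, b⟩, c₁, c₂, c₃⟩, d₁, d₂, d₃⟩
        ⟨⟨⟨⟨a₁', a₂', a₃'⟩, b'⟩, c₁', c₂', c₃'⟩, d₁', d₂', d₃'⟩
      simp only [tensor4, submatrix_apply, kronecker_apply, one_apply, Equiv.trans_apply,
        outputsByTransformation, splitB, Equiv.coe_fn_mk, Prod.mk.injEq]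
      split_ifs <;> simp_all)
    (productState ψABC ψABD ψACD ψBCD)
  obtain ⟨p₁, p₂, p₃⟩ := p
  obtain ⟨q₁, q₂, q₃⟩ := q
  obtain ⟨s₁, s₂, s₃⟩ := s
  rw [hχ, hloc, hloc, Finset.sum_mul, Finset.sum_mul]
  refine Finset.sum_congr rfl fun i _ => ?_
  simp only [productState, inputsByTransformation, splitB, Equiv.trans_apply, Equiv.symm_trans,
    Equiv.symm_mk, Equiv.coe_fn_mk, Prod.mk.eta]
  ring

theorem pullback_partyC_mul_eq (hU : IsUnitaryCircuit UAB UAC UAD UBC UBD UCD)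
    (M : Matrix (kAC_C × kBC_C × kCD_C) (kAC_C × kBC_C × kCD_C) ℂ)
    {χ : _ → ℂ} (hχ : χ = (circuitUnitary UAB UAC UAD UBC UBD UCD)ᴴ *ᵥ (tensor4 1 1 M 1 *ᵥ
      (circuitUnitary UAB UAC UAD UBC UBD UCD *ᵥ productState ψABC ψABD ψACD ψBCD)))
    (p q q' r s) : χ (p, q, r, s) * ψABD q' = χ (p, q', r, s) * ψABD q := by
  have hloc := conjTranspose_mulVec_mulVec_mulVec_apply (outputsByTransformation.trans splitC)
    (inputsByTransformation.trans splitC) (UAC ⊗ₖ UBC ⊗ₖ UCD)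
    (conjTranspose_kronecker_mul_kronecker (conjTranspose_kronecker_mul_kronecker hU.ab.1 hU.ad.1)
      hU.bd.1)
    ((M ⊗ₖ 1).submatrix (fun ⟨⟨(a, c₁), (b, c₂)⟩, (c₃, d)⟩ => ((c₁, c₂, c₃), (a, b, d)))
      (fun ⟨⟨(a, c₁), (b, c₂)⟩, (c₃, d)⟩ => ((c₁, c₂, c₃), (a, b, d))))
    (W := circuitUnitary UAB UAC UAD UBC UBD UCD) (O := tensor4 1 1 M 1)
    (by
      ext
      simp only [circuitUnitary, outputsByTransformation, inputsByTransformation, splitC,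
        submatrix_apply, kroneckerMap_apply, Equiv.coe_trans, Equiv.coe_fn_mk, Function.comp_apply]
      ring)
    (by
      ext ⟨⟨⟨⟨a₁, a₂, a₃⟩, b₁, b₂, b₃⟩, c⟩, d₁, d₂, d₃⟩
        ⟨⟨⟨⟨a₁', a₂', a₃'⟩, b₁', b₂', b₃'⟩, c'⟩, d₁', d₂', d₃'⟩
      simp only [tensor4, submatrix_apply, kronecker_apply, one_apply, Equiv.trans_apply,
        outputsByTransformation, splitC, Equiv.coe_fn_mk, Prod.mk.injEq]
      split_ifs <;> simp_all)
    (productState ψABC ψABD ψACD ψBCD)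
  obtain ⟨p₁, p₂, p₃⟩ := p
  obtain ⟨r₁, r₂, r₃⟩ := r
  obtain ⟨s₁, s₂, s₃⟩ := s
  rw [hχ, hloc, hloc, Finset.sum_mul, Finset.sum_mul]
  refine Finset.sum_congr rfl fun i _ => ?_
  simp only [productState, inputsByTransformation, splitC, Equiv.trans_apply, Equiv.symm_trans,
    Equiv.symm_mk, Equiv.coe_fn_mk, Prod.mk.eta]
  ring

theorem pullback_partyD_mul_eq (hU : IsUnitaryCircuit UAB UAC UAD UBC UBD UCD)
    (M : Matrix (kAD_D × kBD_D × kCD_D) (kAD_D × kBD_D × kCD_D) ℂ)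
    {χ : _ → ℂ} (hχ : χ = (circuitUnitary UAB UAC UAD UBC UBD UCD)ᴴ *ᵥ (tensor4 1 1 1 M *ᵥ
      (circuitUnitary UAB UAC UAD UBC UBD UCD *ᵥ productState ψABC ψABD ψACD ψBCD)))
    (p p' q r s) : χ (p, q, r, s) * ψABC p' = χ (p', q, r, s) * ψABC p := by
  have hloc := conjTranspose_mulVec_mulVec_mulVec_apply (outputsByTransformation.trans splitD)
    (inputsByTransformation.trans splitD) (UAD ⊗ₖ UBD ⊗ₖ UCD)
    (conjTranspose_kronecker_mul_kronecker (conjTranspose_kronecker_mul_kronecker hU.ab.1 hU.ac.1)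
      hU.bc.1)
    ((M ⊗ₖ 1).submatrix (fun ⟨⟨(a, d₁), (b, d₂)⟩, (c, d₃)⟩ => ((d₁, d₂, d₃), (a, b, c)))
      (fun ⟨⟨(a, d₁), (b, d₂)⟩, (c, d₃)⟩ => ((d₁, d₂, d₃), (a, b, c))))
    (W := circuitUnitary UAB UAC UAD UBC UBD UCD) (O := tensor4 1 1 1 M)
    (by
      ext
      simp only [circuitUnitary, outputsByTransformation, inputsByTransformation, splitD,
        submatrix_apply, kroneckerMap_apply, Equiv.coe_trans, Equiv.coe_fn_mk, Function.comp_apply,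
        Prod.mk.eta]
      ring)
    (by
      ext ⟨⟨⟨⟨a₁, a₂, a₃⟩, b₁, b₂, b₃⟩, c₁, c₂, c₃⟩, d⟩
        ⟨⟨⟨⟨a₁', a₂', a₃'⟩, b₁', b₂', b₃'⟩, c₁', c₂', c₃'⟩, d'⟩
      simp only [tensor4, submatrix_apply, kronecker_apply, one_apply, Equiv.trans_apply,
        outputsByTransformation, splitD, Equiv.coe_fn_mk, Prod.mk.injEq]
      split_ifs <;> simp_all)
    (productState ψABC ψABD ψACD ψBCD)
  obtain ⟨q₁, q₂, q₃⟩ := q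
  obtain ⟨r₁, r₂, r₃⟩ := r
  obtain ⟨s₁, s₂, s₃⟩ := s
  rw [hχ, hloc, hloc, Finset.sum_mul, Finset.sum_mul]
  refine Finset.sum_congr rfl fun i _ => ?_
  simp only [productState, inputsByTransformation, splitD, Equiv.trans_apply, Equiv.symm_trans,
    Equiv.symm_mk, Equiv.coe_fn_mk, Prod.mk.eta]
  ring

end IsUnitaryCircuit

end Circuit

/-- **Perfect coordination is impossible in the canonical four-party circuit within quantum
theory**: if the four source states are unit vectors, the six transformations are unitary,
and each party performs a binary projective measurement, then the output distribution cannot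
be `P(a,b,c,d) = 1/2` if `a=b=c=d` and `0` otherwise. -/
theorem no_perfect_coordination_without_common_cause
    (ψABC : iABC_AB × iABC_AC × iABC_BC → ℂ)
    (ψABD : iABD_AB × iABD_AD × iABD_BD → ℂ)
    (ψACD : iACD_AC × iACD_AD × iACD_CD → ℂ)
    (ψBCD : iBCD_BC × iBCD_BD × iBCD_CD → ℂ)
    (hψABC : ∑ x, ‖ψABC x‖ ^ 2 = 1) (hψABD : ∑ x, ‖ψABD x‖ ^ 2 = 1)
    (hψACD : ∑ x, ‖ψACD x‖ ^ 2 = 1) (hψBCD : ∑ x, ‖ψBCD x‖ ^ 2 = 1)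
    (UAB : Matrix (kAB_A × kAB_B) (iABC_AB × iABD_AB) ℂ)
    (UAC : Matrix (kAC_A × kAC_C) (iABC_AC × iACD_AC) ℂ)
    (UAD : Matrix (kAD_A × kAD_D) (iABD_AD × iACD_AD) ℂ)
    (UBC : Matrix (kBC_B × kBC_C) (iABC_BC × iBCD_BC) ℂ)
    (UBD : Matrix (kBD_B × kBD_D) (iABD_BD × iBCD_BD) ℂ)
    (UCD : Matrix (kCD_C × kCD_D) (iACD_CD × iBCD_CD) ℂ)
    (hUAB : UABᴴ * UAB = 1 ∧ UAB * UABᴴ = 1) (hUAC : UACᴴ * UAC = 1 ∧ UAC * UACᴴ = 1)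
    (hUAD : UADᴴ * UAD = 1 ∧ UAD * UADᴴ = 1) (hUBC : UBCᴴ * UBC = 1 ∧ UBC * UBCᴴ = 1)
    (hUBD : UBDᴴ * UBD = 1 ∧ UBD * UBDᴴ = 1) (hUCD : UCDᴴ * UCD = 1 ∧ UCD * UCDᴴ = 1)
    (PiA : Bool → Matrix (kAB_A × kAC_A × kAD_A) (kAB_A × kAC_A × kAD_A) ℂ)
    (PiB : Bool → Matrix (kAB_B × kBC_B × kBD_B) (kAB_B × kBC_B × kBD_B) ℂ)
    (PiC : Bool → Matrix (kAC_C × kBC_C × kCD_C) (kAC_C × kBC_C × kCD_C) ℂ)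
    (PiD : Bool → Matrix (kAD_D × kBD_D × kCD_D) (kAD_D × kBD_D × kCD_D) ℂ)
    (hPiA : ∀ t, (PiA t).IsHermitian ∧ PiA t * PiA t = PiA t)
    (hPiB : ∀ t, (PiB t).IsHermitian ∧ PiB t * PiB t = PiB t)
    (hPiC : ∀ t, (PiC t).IsHermitian ∧ PiC t * PiC t = PiC t)
    (hPiD : ∀ t, (PiD t).IsHermitian ∧ PiD t * PiD t = PiD t)
    (hPiAc : PiA false + PiA true = 1) (hPiBc : PiB false + PiB true = 1)
    (hPiCc : PiC false + PiC true = 1) (hPiDc : PiD false + PiD true = 1) :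
    ¬ ∀ a b c d : Bool,
        circuitProb ψABC ψABD ψACD ψBCD UAB UAC UAD UBC UBD UCD PiA PiB PiC PiD a b c d =
          if a = b ∧ b = c ∧ c = d then (1 / 2 : ℂ) else 0 := by
  intro hP
  have hU : IsUnitaryCircuit UAB UAC UAD UBC UBD UCD := ⟨hUAB, hUAC, hUAD, hUBC, hUBD, hUCD⟩
  have hA : IsBinaryMeasurement PiA := ⟨hPiA, hPiAc⟩
  have hB : IsBinaryMeasurement PiB := ⟨hPiB, hPiBc⟩
  have hC : IsBinaryMeasurement PiC := ⟨hPiC, hPiCc⟩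
  have hD : IsBinaryMeasurement PiD := ⟨hPiD, hPiDc⟩
  set W := circuitUnitary UAB UAC UAD UBC UBD UCD
  set Ψ := productState ψABC ψABD ψACD ψBCD
  -- `circuitProb` is this expectation, with the outputs grouped by transformation instead of party.
  have hcoord : IsPerfectlyCoordinated fun a b c d =>
      star (W *ᵥ Ψ) ⬝ᵥ tensor4 (PiA a) (PiB b) (PiC c) (PiD d) *ᵥ (W *ᵥ Ψ) := fun a b c d =>
    (dotProduct_mulVec_conj_submatrix W outputsByParty _ Ψ).symm.trans (hP a b c d)
  obtain ⟨hAB, hAC, hAD⟩ := hcoord.binaryObservable_mulVec_eq hA hB hC hD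
  set χ := Wᴴ *ᵥ (tensor4 (binaryObservable PiA) 1 1 1 *ᵥ (W *ᵥ Ψ)) with hχ
  have hΨ : star Ψ ⬝ᵥ Ψ = 1 := by
    simp [Ψ, dotProduct_star_productState, dotProduct_star_self_eq_one, *]
  have hχ0 : χ = 0 := by
    rw [eq_smul_productState hΨ (hU.pullback_partyD_mul_eq _ (hAD ▸ hχ))
      (hU.pullback_partyC_mul_eq _ (hAC ▸ hχ)) (hU.pullback_partyB_mul_eq _ (hAB ▸ hχ))
      (hU.pullback_partyA_mul_eq _ hχ), hχ, dotProduct_mulVec, ← star_mulVec,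
      hcoord.expectation_binaryObservable_eq_zero hB hC hD, zero_smul]
  have hχ1 : star χ ⬝ᵥ χ = 1 := by
    rw [hχ, star_mulVec_dotProduct_mulVec, conjTranspose_conjTranspose,
      hU.circuitUnitary_mul_conjTranspose, one_mulVec, star_mulVec_dotProduct_mulVec,
      tensor4_conjTranspose_mul, hA.isHermitian_binaryObservable.eq, hA.binaryObservable_mul_self]
    simpa [tensor4_one] using hcoord.dotProduct_star_self hA hB hC hD
  simp [hχ0] at hχ1

end
end

section
/- Let H be a complex Hilbert space, let φ ∈ H be a unit vector, and let A, B, C, D be self-adjoint continuous linear operators on H with A² = B² = C² = D² = 1 (the identity). Suppose the pairs (A,B), (B,C), (C,D), and (A,D) each commute, and suppose the independence condition ⟨φ, A D φ⟩ = ⟨φ, A φ⟩ · ⟨φ, D φ⟩ holds. Then ⟨φ, A B φ⟩ + ⟨φ, B C φ⟩ + ⟨φ, C D φ⟩ ≤ (1/2)·⟨φ, A φ⟩·⟨φ, D φ⟩ + (3√3)/2. -/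
open scoped InnerProductSpace

/-- **Noise-robust Bell-like inequality (Eq. (1) of the paper).** Let `A, B, C, D` be
self-adjoint continuous linear operators on a complex Hilbert space with `A² = B² = C² = D² = 1`
(±1-valued observables), let `φ` be a unit vector, suppose the pairs `(A,B)`, `(B,C)`, `(C,D)`,
`(A,D)` commute, and suppose `A` and `D` are statistically independent on `φ`. Then
`⟨AB⟩ + ⟨BC⟩ + ⟨CD⟩ ≤ ⟨A⟩⟨D⟩/2 + 3√3/2`. -/
theorem bell_like_inequality {H : Type*} [NormedAddCommGroup H]
    [InnerProductSpace ℂ H] [CompleteSpace H]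
    (φ : H) (hφ : ‖φ‖ = 1) (A B C D : H →L[ℂ] H)
    (hAsa : IsSelfAdjoint A) (hBsa : IsSelfAdjoint B)
    (hCsa : IsSelfAdjoint C) (hDsa : IsSelfAdjoint D)
    (hA2 : A * A = 1) (hB2 : B * B = 1) (hC2 : C * C = 1) (hD2 : D * D = 1)
    (hAB : A * B = B * A) (hBC : B * C = C * B)
    (hCD : C * D = D * C) (hAD : A * D = D * A)
    (hInd : ⟪φ, A (D φ)⟫_ℂ = ⟪φ, A φ⟫_ℂ * ⟪φ, D φ⟫_ℂ) :
    (⟪φ, A (B φ)⟫_ℂ).re + (⟪φ, B (C φ)⟫_ℂ).re + (⟪φ, C (D φ)⟫_ℂ).re ≤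
      1 / 2 * ((⟪φ, A φ⟫_ℂ).re * (⟪φ, D φ⟫_ℂ).re) + 3 * Real.sqrt 3 / 2 := by
  have hs3 : Real.sqrt 3 * Real.sqrt 3 = 3 := Real.mul_self_sqrt (by norm_num)
  have hs3pos : (0:ℝ) < Real.sqrt 3 := Real.sqrt_pos.mpr (by norm_num)
  -- square facts: ⟪Xφ, Xφ⟫ = 1
  have sq : ∀ (X : H →L[ℂ] H), IsSelfAdjoint X → X * X = 1 → ⟪X φ, X φ⟫_ℂ = 1 := by
    intro X hX h2
    have h1 : ⟪X φ, X φ⟫_ℂ = ⟪φ, (X * X) φ⟫_ℂ := hX.isSymmetric φ (X φ)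
    rw [h1, h2, ContinuousLinearMap.one_apply, inner_self_eq_norm_sq_to_K, hφ]
    norm_num
  have hAA : ⟪A φ, A φ⟫_ℂ = 1 := sq A hAsa hA2
  have hBB : ⟪B φ, B φ⟫_ℂ = 1 := sq B hBsa hB2
  have hCC : ⟪C φ, C φ⟫_ℂ = 1 := sq C hCsa hC2
  have hDD : ⟪D φ, D φ⟫_ℂ = 1 := sq D hDsa hD2
  -- cross terms
  have cross1 : ∀ (X Y : H →L[ℂ] H), IsSelfAdjoint X →
      ⟪X φ, Y φ⟫_ℂ = ⟪φ, X (Y φ)⟫_ℂ := fun X Y hX => hX.isSymmetric φ (Y φ)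
  have cross2 : ∀ (X Y : H →L[ℂ] H), IsSelfAdjoint X → IsSelfAdjoint Y → X * Y = Y * X →
      ⟪Y φ, X φ⟫_ℂ = ⟪φ, X (Y φ)⟫_ℂ := by
    intro X Y hX hY hcomm
    have h1 : ⟪Y φ, X φ⟫_ℂ = ⟪φ, (Y * X) φ⟫_ℂ := hY.isSymmetric φ (X φ)
    rw [h1, ← hcomm]; rfl
  have hABc := cross1 A B hAsa
  have hBAc := cross2 A B hAsa hBsa hAB
  have hADc := cross1 A D hAsa
  have hDAc := cross2 A D hAsa hDsa hAD
  have hBCc := cross1 B C hBsa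
  have hCBc := cross2 B C hBsa hCsa hBC
  have hCDc := cross1 C D hCsa
  have hDCc := cross2 C D hCsa hDsa hCD
  -- scalars
  set ab := ⟪φ, A (B φ)⟫_ℂ
  set bc := ⟪φ, B (C φ)⟫_ℂ
  set cd := ⟪φ, C (D φ)⟫_ℂ
  set ad := ⟪φ, A (D φ)⟫_ℂ
  set a := ⟪φ, A φ⟫_ℂ
  set d := ⟪φ, D φ⟫_ℂ
  set c' : ℝ := Real.sqrt 3 / 2 with hc'
  set cc : ℂ := (c' : ℂ) with hcc
  have hcc2 : cc * cc = 3 / 4 := by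
    rw [hcc, hc']
    have h : ((Real.sqrt 3 * Real.sqrt 3 : ℝ) : ℂ) = 3 := by rw [hs3]; norm_num
    push_cast at h ⊢
    linear_combination h / 4
  -- the SOS vectors
  set ψ : H := cc • A φ - B φ + (2:ℂ)⁻¹ • D φ with hψ
  set χ : H := (2 * cc) • C φ - B φ - D φ with hχ
  have key : ⟪ψ, ψ⟫_ℂ + (2:ℂ)⁻¹ * ⟪χ, χ⟫_ℂ
      = 9 / 2 - 2 * cc * (ab + bc + cd) + cc * ad := by
    simp only [hψ, hχ, inner_sub_left, inner_sub_right, inner_add_left, inner_add_right,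
      inner_smul_left, inner_smul_right, map_mul, hcc, Complex.conj_ofReal, map_inv₀,
      map_ofNat, hAA, hBB, hCC, hDD, hABc, hBAc, hADc, hDAc, hBCc, hCBc, hCDc, hDCc]
    rw [← hcc]
    linear_combination 3 * hcc2
  -- expectation values of self-adjoint operators are real
  have real_exp : ∀ (X : H →L[ℂ] H), IsSelfAdjoint X → (⟪φ, X φ⟫_ℂ).im = 0 := by
    intro X hX
    rw [← Complex.conj_eq_iff_im]
    rw [inner_conj_symm (X φ) φ]
    exact hX.isSymmetric φ φ
  have haim : a.im = 0 := real_exp A hAsa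
  have hdim : d.im = 0 := real_exp D hDsa
  -- take real parts of the key identity
  have hψn : ⟪ψ, ψ⟫_ℂ = ((‖ψ‖ ^ 2 : ℝ) : ℂ) := by
    rw [inner_self_eq_norm_sq_to_K]; norm_cast
  have hχn : ⟪χ, χ⟫_ℂ = ((‖χ‖ ^ 2 : ℝ) : ℂ) := by
    rw [inner_self_eq_norm_sq_to_K]; norm_cast
  rw [hψn, hχn, hInd] at key
  have h := congrArg Complex.re key
  simp only [Complex.add_re, Complex.sub_re, Complex.mul_re, Complex.ofReal_re,
    Complex.ofReal_im, Complex.inv_re, Complex.inv_im, hcc, haim, hdim] at h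
  norm_num at h
  have hre : 0 ≤ 9 / 2 - 2 * c' * (ab.re + bc.re + cd.re) + c' * (a.re * d.re) := by
    nlinarith [sq_nonneg ‖ψ‖, sq_nonneg ‖χ‖, h]
  rw [hc'] at hre
  nlinarith [hre, hs3, hs3pos]
end
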